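/- arXiv:1703.07120 — 2 statements merged into one kernel-verified Lean document; each statement's English description precedes it below -/
import Mathlib

section
/- For every fixed integer k ≥ L there exist constants c > 0 and μ* > 0 such that for all μ with 0 ≤ μ ≤ μ*, the preconditioner P̂(μ) is invertible and ‖T_S(μ)^k‖ ≤ c · μ. (This uses that T_S(0) = E ⊗ H is nilpotent with (E ⊗ H)^L = 0, since E^L = 0.) -/
/-!
STATEMENT 3: For every fixed integer k ≥ L there exist constants c > 0 and μ* > 0
such that for all 0 ≤ μ ≤ μ*, P̂(μ) is invertible and ‖T_S(μ)^k‖ ≤ c · μ.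
(This uses that T_S(0) = E ⊗ H is nilpotent with (E ⊗ H)^L = 0, since E^L = 0.)
-/

set_option maxHeartbeats 1000000
set_option synthInstance.maxHeartbeats 1000000

noncomputable section

open Matrix
open scoped Kronecker

/-- Complexification of a real matrix. -/
def cmplx {m n : Type*} (A : Matrix m n ℝ) : Matrix m n ℂ := A.map (fun x => (x : ℂ))

/-- The matrix `E` with ones on the first subdiagonal and zeros elsewhere. -/
def Emat (L : ℕ) : Matrix (Fin L) (Fin L) ℂ :=
  Matrix.of fun i j => if (i : ℕ) = (j : ℕ) + 1 then 1 else 0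

/-- The matrix `N_M` whose last column consists of ones, all other entries zero. -/
def Nmat (M : ℕ) : Matrix (Fin M) (Fin M) ℂ :=
  Matrix.of fun _ j => if (j : ℕ) = M - 1 then 1 else 0

/-- `H = N_M ⊗ I_N`. -/
def Hmat (M N : ℕ) : Matrix (Fin M × Fin N) (Fin M × Fin N) ℂ :=
  Nmat M ⊗ₖ (1 : Matrix (Fin N) (Fin N) ℂ)

/-- `E ⊗ H`. -/
def EH (L M N : ℕ) : Matrix (Fin L × Fin M × Fin N) (Fin L × Fin M × Fin N) ℂ :=
  Emat L ⊗ₖ Hmat M N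

/-- The composite collocation matrix `C(μ) = I − μ (I_L ⊗ Q ⊗ A) − E ⊗ H`. -/
def Cmat (L : ℕ) {M N : ℕ} (Q : Matrix (Fin M) (Fin M) ℝ) (A : Matrix (Fin N) (Fin N) ℂ)
    (μ : ℝ) : Matrix (Fin L × Fin M × Fin N) (Fin L × Fin M × Fin N) ℂ :=
  1 - (μ : ℂ) • ((1 : Matrix (Fin L) (Fin L) ℂ) ⊗ₖ (cmplx Q ⊗ₖ A)) - EH L M N

/-- The approximative block Jacobi preconditioner `P̂(μ) = I − μ (I_L ⊗ Q_Δ ⊗ A)`. -/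
def Phat (L : ℕ) {M N : ℕ} (QΔ : Matrix (Fin M) (Fin M) ℝ) (A : Matrix (Fin N) (Fin N) ℂ)
    (μ : ℝ) : Matrix (Fin L × Fin M × Fin N) (Fin L × Fin M × Fin N) ℂ :=
  1 - (μ : ℂ) • ((1 : Matrix (Fin L) (Fin L) ℂ) ⊗ₖ (cmplx QΔ ⊗ₖ A))

/-- The smoother iteration matrix `T_S(μ) = I − P̂(μ)⁻¹ C(μ)`. -/
def Tsmooth (L : ℕ) {M N : ℕ} (Q QΔ : Matrix (Fin M) (Fin M) ℝ)
    (A : Matrix (Fin N) (Fin N) ℂ) (μ : ℝ) :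
    Matrix (Fin L × Fin M × Fin N) (Fin L × Fin M × Fin N) ℂ :=
  1 - (Phat L QΔ A μ)⁻¹ * Cmat L Q A μ

/-- The operator norm induced by the Euclidean vector norm. -/
def opNorm {n : Type*} [Fintype n] [DecidableEq n] (A : Matrix n n ℂ) : ℝ :=
  ‖Matrix.toEuclideanCLM (𝕜 := ℂ) A‖

/- auxiliary lemmas -/


lemma Emat_pow (L n : ℕ) :
    (Emat L) ^ n = Matrix.of fun (i j : Fin L) => if (i : ℕ) = (j : ℕ) + n then (1:ℂ) else 0 := by
  induction n with
  | zero =>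
    ext i j
    simp [Matrix.one_apply, Fin.ext_iff]
  | succ n ih =>
    ext i j
    rw [pow_succ, Matrix.mul_apply]
    simp only [ih]
    simp only [Emat, Matrix.of_apply]
    by_cases h : (j : ℕ) + 1 < L
    · rw [Finset.sum_eq_single (⟨(j : ℕ) + 1, h⟩ : Fin L)]
      · simp only [if_pos rfl, mul_one]
        simp [add_assoc, add_comm 1 n]
      · intro b _ hb
        have : ¬ ((b : ℕ) = (j : ℕ) + 1) := fun hh => hb (Fin.ext hh)
        simp [this]
      · simp
    · rw [Finset.sum_eq_zero]
      · have : ¬ ((i : ℕ) = (j : ℕ) + (n + 1)) := by omega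
        simp [this]
      · intro b _
        have : ¬ ((b : ℕ) = (j : ℕ) + 1) := by omega
        simp [this]

lemma Emat_pow_self (L : ℕ) : (Emat L) ^ L = 0 := by
  rw [Emat_pow]
  ext i j
  have : ¬ ((i : ℕ) = (j : ℕ) + L) := by omega
  simp [this]

lemma kronecker_pow {p q : Type*} [Fintype p] [DecidableEq p] [Fintype q] [DecidableEq q]
    (A : Matrix p p ℂ) (B : Matrix q q ℂ) (n : ℕ) :
    (A ⊗ₖ B) ^ n = (A ^ n) ⊗ₖ (B ^ n) := by
  induction n with
  | zero => simp [Matrix.one_kronecker_one]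
  | succ n ih => rw [pow_succ, pow_succ, pow_succ, ih, Matrix.mul_kronecker_mul]

lemma norm_pow_le_of_le {R : Type*} [NormedRing R] {x : R} {a : ℝ}
    (h1 : ‖(1 : R)‖ ≤ 1) (ha : 1 ≤ a) (hx : ‖x‖ ≤ a) (n : ℕ) : ‖x ^ n‖ ≤ a ^ n := by
  induction n with
  | zero => simpa using h1
  | succ n ih =>
    rw [pow_succ, pow_succ]
    calc ‖x ^ n * x‖ ≤ ‖x ^ n‖ * ‖x‖ := norm_mul_le _ _
    _ ≤ a ^ n * a := mul_le_mul ih hx (norm_nonneg _) (pow_nonneg (by linarith) _)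

lemma pow_sub_pow_norm_le {R : Type*} [NormedRing R] {x y : R} {a : ℝ}
    (h1 : ‖(1 : R)‖ ≤ 1) (ha : 1 ≤ a) (hx : ‖x‖ ≤ a) (hy : ‖y‖ ≤ a) (n : ℕ) :
    ‖x ^ n - y ^ n‖ ≤ n * a ^ n * ‖x - y‖ := by
  induction n with
  | zero => simp
  | succ n ih =>
    have key : x ^ (n + 1) - y ^ (n + 1) = x * (x ^ n - y ^ n) + (x - y) * y ^ n := by
      rw [mul_sub, sub_mul, ← pow_succ', ← pow_succ']
      abel
    have h2 : ‖x ^ (n+1) - y ^ (n+1)‖ ≤ ‖x‖ * ‖x ^ n - y ^ n‖ + ‖x - y‖ * ‖y ^ n‖ := by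
      rw [key]
      exact (norm_add_le _ _).trans (add_le_add (norm_mul_le _ _) (norm_mul_le _ _))
    have h3 : ‖y ^ n‖ ≤ a ^ n := norm_pow_le_of_le h1 ha hy n
    have h4 : (0:ℝ) ≤ ‖x - y‖ := norm_nonneg _
    have h5 : a ^ n ≤ a ^ (n+1) := by
      calc a ^ n = a ^ n * 1 := by ring
      _ ≤ a ^ n * a := by nlinarith [pow_nonneg (le_trans zero_le_one ha) n]
      _ = a ^ (n+1) := by ring
    have h6 : ‖x‖ * ‖x ^ n - y ^ n‖ ≤ a * (n * a ^ n * ‖x - y‖) := by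
      apply mul_le_mul hx ih (norm_nonneg _) (by linarith)
    have h7 : ‖x - y‖ * ‖y ^ n‖ ≤ ‖x - y‖ * a ^ n := mul_le_mul_of_nonneg_left h3 h4
    have h8 : ‖x - y‖ * a ^ n ≤ ‖x - y‖ * a ^ (n+1) := mul_le_mul_of_nonneg_left h5 h4
    have h9 : a * (↑n * a ^ n * ‖x - y‖) = ↑n * a ^ (n+1) * ‖x - y‖ := by ring
    push_cast
    nlinarith [mul_nonneg (mul_nonneg (Nat.cast_nonneg n)
      (pow_nonneg (le_trans zero_le_one ha) (n+1))) h4]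

theorem stmt_3 (L M N : ℕ) (hL : 0 < L) (hM : 0 < M) (hN : 0 < N)
    (Q QΔ : Matrix (Fin M) (Fin M) ℝ) (A : Matrix (Fin N) (Fin N) ℂ)
    (k : ℕ) (hk : L ≤ k) :
    (EH L M N) ^ L = 0 ∧
    ∃ c > (0 : ℝ), ∃ μs > (0 : ℝ), ∀ μ : ℝ, 0 ≤ μ → μ ≤ μs →
      IsUnit (Phat L QΔ A μ) ∧
      opNorm ((Tsmooth L Q QΔ A μ) ^ k) ≤ c * μ := by
  have hEHL : (EH L M N) ^ L = 0 := by
    rw [EH, kronecker_pow, Emat_pow_self, Matrix.zero_kronecker]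
  refine ⟨hEHL, ?_⟩
  let φ := Matrix.toEuclideanCLM (𝕜 := ℂ) (n := Fin L × Fin M × Fin N)
  let x := φ ((1 : Matrix (Fin L) (Fin L) ℂ) ⊗ₖ (cmplx QΔ ⊗ₖ A))
  let y := φ ((1 : Matrix (Fin L) (Fin L) ℂ) ⊗ₖ (cmplx Q ⊗ₖ A))
  let e := φ (EH L M N)
  have hone : ‖(1 : EuclideanSpace ℂ (Fin L × Fin M × Fin N) →L[ℂ]
      EuclideanSpace ℂ (Fin L × Fin M × Fin N))‖ ≤ 1 := by
    rw [ContinuousLinearMap.one_def]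
    exact ContinuousLinearMap.norm_id_le
  have hek : e ^ k = 0 := by
    have heL : e ^ L = 0 := by
      rw [← _root_.map_pow, hEHL, _root_.map_zero]
    calc e ^ k = e ^ L * e ^ (k - L) := by rw [← pow_add, Nat.add_sub_cancel' hk]
    _ = 0 := by rw [heL, zero_mul]
  set K : ℝ := 2 * ‖x‖ + 2 * ‖y‖ + 2 * ‖x‖ * ‖e‖ + 1 with hKdef
  have hK1 : 1 ≤ K := by
    nlinarith [norm_nonneg x, norm_nonneg y, norm_nonneg e,
      mul_nonneg (norm_nonneg x) (norm_nonneg e)]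
  have hK0 : 0 < K := by linarith
  set a : ℝ := ‖e‖ + K with hadef
  have ha1 : 1 ≤ a := by
    have := norm_nonneg e
    simp only [hadef]; linarith
  have ha0 : 0 < a := by linarith
  have hcpos : (0:ℝ) < (k : ℝ) * a ^ k * K + 1 := by
    have h1 : (0:ℝ) ≤ (k : ℝ) * a ^ k * K :=
      mul_nonneg (mul_nonneg (Nat.cast_nonneg k) (pow_nonneg ha0.le k)) hK0.le
    linarith
  refine ⟨(k : ℝ) * a ^ k * K + 1, hcpos, min 1 (2 * (‖x‖ + 1))⁻¹, ?_, ?_⟩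
  · have : (0:ℝ) < (2 * (‖x‖ + 1))⁻¹ := by positivity
    exact lt_min one_pos this
  intro μ hμ0 hμs
  have hμ1 : μ ≤ 1 := le_trans hμs (min_le_left _ _)
  have hnormx : ‖(μ : ℂ) • x‖ ≤ μ * ‖x‖ := by
    have h := ContinuousLinearMap.opNorm_smul_le ((μ : ℂ)) x
    rwa [Complex.norm_real, Real.norm_eq_abs, abs_of_nonneg hμ0] at h
  have hμx : ‖(μ : ℂ) • x‖ ≤ 1/2 := by
    refine hnormx.trans ?_
    have h2 : μ ≤ (2 * (‖x‖ + 1))⁻¹ := le_trans hμs (min_le_right _ _)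
    have key : (2 * (‖x‖ + 1))⁻¹ * (‖x‖ + 1) = 1/2 := by
      have hne : ‖x‖ + 1 ≠ 0 := by positivity
      field_simp
    calc μ * ‖x‖ ≤ (2 * (‖x‖ + 1))⁻¹ * (‖x‖ + 1) := by
          apply mul_le_mul h2 (by linarith [norm_nonneg x]) (norm_nonneg x) (by positivity)
    _ = 1/2 := key
  have hμx1 : ‖(μ : ℂ) • x‖ < 1 := lt_of_le_of_lt hμx (by norm_num)
  set w := (μ : ℂ) • x with hwdef
  let u : (EuclideanSpace ℂ (Fin L × Fin M × Fin N) →L[ℂ]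
      EuclideanSpace ℂ (Fin L × Fin M × Fin N))ˣ := Units.oneSub w hμx1
  set v := ((u⁻¹ : _ˣ) : EuclideanSpace ℂ (Fin L × Fin M × Fin N) →L[ℂ]
      EuclideanSpace ℂ (Fin L × Fin M × Fin N)) with hvdef
  have huval : (u : EuclideanSpace ℂ (Fin L × Fin M × Fin N) →L[ℂ]
      EuclideanSpace ℂ (Fin L × Fin M × Fin N)) = 1 - w := rfl
  have hvu : v * (1 - w) = 1 := by rw [← huval]; exact u.inv_mul
  have huv : (1 - w) * v = 1 := by rw [← huval]; exact u.mul_inv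
  -- v = 1 + w * v  and  v - 1 = v * w
  have hv1 : v - 1 = v * w := by
    have h := hvu
    rw [mul_sub, mul_one] at h
    rw [← h]; abel
  have hv2 : v = 1 + w * v := by
    have h := huv
    rw [sub_mul, one_mul] at h
    rw [← h]; abel
  have hwnorm : ‖w‖ ≤ μ * ‖x‖ := by rw [hwdef]; exact hnormx
  have hvnorm : ‖v‖ ≤ 2 := by
    have h := hv2
    have : ‖v‖ ≤ ‖(1 : EuclideanSpace ℂ (Fin L × Fin M × Fin N) →L[ℂ]
        EuclideanSpace ℂ (Fin L × Fin M × Fin N))‖ + ‖w‖ * ‖v‖ := by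
      calc ‖v‖ = ‖1 + w * v‖ := by rw [← hv2]
      _ ≤ ‖(1 : _ →L[ℂ] _)‖ + ‖w * v‖ := norm_add_le _ _
      _ ≤ _ := by gcongr; exact norm_mul_le _ _
    have hwv : ‖w‖ * ‖v‖ ≤ (1/2) * ‖v‖ :=
      mul_le_mul_of_nonneg_right hμx (norm_nonneg _)
    nlinarith [norm_nonneg v]
  have hv1norm : ‖v - 1‖ ≤ 2 * (μ * ‖x‖) := by
    rw [hv1]
    calc ‖v * w‖ ≤ ‖v‖ * ‖w‖ := norm_mul_le _ _
    _ ≤ 2 * (μ * ‖x‖) :=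
      mul_le_mul hvnorm hwnorm (norm_nonneg _) (by norm_num)
  -- the preconditioner is a unit
  have hφP : φ (Phat L QΔ A μ) = 1 - w := by
    rw [Phat, _root_.map_sub, _root_.map_one,
      _root_.map_smul φ (μ : ℂ) ((1 : Matrix (Fin L) (Fin L) ℂ) ⊗ₖ (cmplx QΔ ⊗ₖ A))]
  let B := φ.symm v
  have hφB : φ B = v := φ.apply_symm_apply v
  have hPB : Phat L QΔ A μ * B = 1 := by
    have h : φ (Phat L QΔ A μ * B) = φ 1 := by
      rw [_root_.map_mul, _root_.map_one, hφP, hφB]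
      exact huv
    exact φ.injective h
  have hBP : B * Phat L QΔ A μ = 1 := by
    have h : φ (B * Phat L QΔ A μ) = φ 1 := by
      rw [_root_.map_mul, _root_.map_one, hφP, hφB]
      exact hvu
    exact φ.injective h
  have hUnit : IsUnit (Phat L QΔ A μ) := ⟨⟨Phat L QΔ A μ, B, hPB, hBP⟩, rfl⟩
  refine ⟨hUnit, ?_⟩
  have hPinv : (Phat L QΔ A μ)⁻¹ = B := Matrix.inv_eq_right_inv hPB
  -- the smoother iteration matrix in the CLM algebra
  set t := φ (Tsmooth L Q QΔ A μ) with htdef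
  have hφC : φ (Cmat L Q A μ) = 1 - (μ : ℂ) • y - e := by
    rw [Cmat, _root_.map_sub, _root_.map_sub, _root_.map_one,
      _root_.map_smul φ (μ : ℂ) ((1 : Matrix (Fin L) (Fin L) ℂ) ⊗ₖ (cmplx Q ⊗ₖ A))]
  have hφT : t = 1 - v * (1 - (μ : ℂ) • y - e) := by
    rw [htdef, Tsmooth, _root_.map_sub, _root_.map_one, _root_.map_mul, hPinv, hφB, hφC]
  set y' := (μ : ℂ) • y with hy'def
  have hdecomp : t - e = -(v - 1) + v * y' + (v - 1) * e := by
    rw [hφT]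
    rw [mul_sub, mul_sub, mul_one, sub_mul, one_mul, neg_sub]
    abel
  have hy'norm : ‖y'‖ ≤ μ * ‖y‖ := by
    rw [hy'def]
    have h := ContinuousLinearMap.opNorm_smul_le ((μ : ℂ)) y
    rwa [Complex.norm_real, Real.norm_eq_abs, abs_of_nonneg hμ0] at h
  have htse : ‖t - e‖ ≤ μ * K := by
    rw [hdecomp]
    have step : ‖-(v - 1) + v * y' + (v - 1) * e‖ ≤
        ‖v - 1‖ + ‖v‖ * ‖y'‖ + ‖v - 1‖ * ‖e‖ := by
      calc ‖-(v - 1) + v * y' + (v - 1) * e‖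
          ≤ ‖-(v - 1) + v * y'‖ + ‖(v - 1) * e‖ := norm_add_le _ _
      _ ≤ ‖-(v - 1)‖ + ‖v * y'‖ + ‖(v - 1) * e‖ := by gcongr; exact norm_add_le _ _
      _ ≤ ‖v - 1‖ + ‖v‖ * ‖y'‖ + ‖v - 1‖ * ‖e‖ := by
          rw [norm_neg]
          gcongr <;> [exact norm_mul_le _ _; exact norm_mul_le _ _]
    refine step.trans ?_
    have b1 : ‖v‖ * ‖y'‖ ≤ 2 * (μ * ‖y‖) :=
      mul_le_mul hvnorm hy'norm (norm_nonneg _) (by norm_num)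
    have b2 : ‖v - 1‖ * ‖e‖ ≤ 2 * (μ * ‖x‖) * ‖e‖ :=
      mul_le_mul_of_nonneg_right hv1norm (norm_nonneg _)
    rw [hKdef]
    nlinarith [norm_nonneg e, norm_nonneg x, norm_nonneg y]
  have hte : ‖t‖ ≤ a := by
    have : ‖t‖ ≤ ‖e‖ + ‖t - e‖ := by
      calc ‖t‖ = ‖e + (t - e)‖ := by congr 1; abel
      _ ≤ ‖e‖ + ‖t - e‖ := norm_add_le _ _
    have hμK : μ * K ≤ K := by nlinarith
    rw [hadef]
    linarith
  have hea : ‖e‖ ≤ a := by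
    rw [hadef]; linarith
  have hfinal : ‖t ^ k - e ^ k‖ ≤ k * a ^ k * ‖t - e‖ :=
    pow_sub_pow_norm_le hone ha1 hte hea k
  have hopeq : opNorm ((Tsmooth L Q QΔ A μ) ^ k) = ‖t ^ k‖ := by
    rw [opNorm]
    congr 1
    rw [htdef, ← _root_.map_pow]
  rw [hopeq]
  have : ‖t ^ k‖ ≤ k * a ^ k * (μ * K) := by
    have h := hfinal
    rw [hek, sub_zero] at h
    refine h.trans ?_
    have hnn : (0:ℝ) ≤ (k : ℝ) * a ^ k :=
      mul_nonneg (Nat.cast_nonneg k) (pow_nonneg ha0.le k)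
    rw [mul_assoc, mul_assoc]
    exact mul_le_mul_of_nonneg_left (mul_le_mul_of_nonneg_left htse (pow_nonneg ha0.le k)) (Nat.cast_nonneg k)
  refine this.trans ?_
  calc (k : ℝ) * a ^ k * (μ * K) = ((k : ℝ) * a ^ k * K) * μ := by ring
  _ ≤ ((k : ℝ) * a ^ k * K + 1) * μ := mul_le_mul_of_nonneg_right (by linarith) hμ0
end
end

section
/- Assume Q_Δ and A are invertible and define T_S(∞) = I_L ⊗ (I_M − Q_Δ^{-1} Q) ⊗ I_N. Then there exist constants c > 0 and μ* > 0 such that for all μ ≥ μ*, the preconditioner P̂(μ) is invertible and ‖T_S(μ) − T_S(∞)‖ ≤ c / μ. -/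
/-!
STATEMENT 9: Assume Q_Δ and A are invertible and define
T_S(∞) = I_L ⊗ (I_M − Q_Δ⁻¹ Q) ⊗ I_N. Then there exist c > 0 and μ* > 0 such that
for all μ ≥ μ*, P̂(μ) is invertible and ‖T_S(μ) − T_S(∞)‖ ≤ c / μ.
-/

noncomputable section

open Matrix
open scoped Kronecker

/-!
Write `P(μ) = 1 - μ b` with `b = I_L ⊗ Q_Δ ⊗ A`, `k = I_L ⊗ Q ⊗ A` and `t = T_S(∞)`, so that
`b (1 - t) = k`. Then `T_S(μ) - t = P(μ)⁻¹ (E ⊗ H - t)` exactly, and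
`P(μ)⁻¹ = μ⁻¹ (μ⁻¹ - b)⁻¹`, where `(μ⁻¹ - b)⁻¹ → (-b)⁻¹` by continuity of inversion at the
unit `-b`. Hence `‖P(μ)⁻¹‖ = O(1/μ)`, and so is the difference.
-/

open Filter Topology

theorem Matrix.sub_kronecker {α l m n p : Type*} [NonUnitalNonAssocRing α]
    (A₁ A₂ : Matrix l m α) (B : Matrix n p α) : (A₁ - A₂) ⊗ₖ B = A₁ ⊗ₖ B - A₂ ⊗ₖ B := by
  ext
  simp [sub_mul]

theorem Matrix.kronecker_sub {α l m n p : Type*} [NonUnitalNonAssocRing α]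
    (A : Matrix l m α) (B₁ B₂ : Matrix n p α) : A ⊗ₖ (B₁ - B₂) = A ⊗ₖ B₁ - A ⊗ₖ B₂ := by
  ext
  simp [mul_sub]

theorem cmplx_eq_mapMatrix {m : Type*} [Fintype m] [DecidableEq m] (X : Matrix m m ℝ) :
    cmplx X = (algebraMap ℝ ℂ).mapMatrix X :=
  rfl

theorem one_sub_inverse_mul_sub_eq {R A : Type*} [CommRing R] [Ring A] [Algebra R A]
    {r : R} {b k e t : A} (hP : IsUnit (1 - r • b)) (ht : b * (1 - t) = k) :
    (1 - Ring.inverse (1 - r • b) * (1 - r • k - e)) - t =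
      Ring.inverse (1 - r • b) * (e - t) := by
  refine hP.mul_left_cancel ?_
  rw [← mul_assoc, Ring.mul_inverse_cancel _ hP, one_mul, ← ht]
  simp only [mul_sub, sub_mul, ← mul_assoc, Ring.mul_inverse_cancel _ hP, one_mul, mul_one,
    smul_mul_assoc, smul_sub]
  abel

section NormedAlgebra

variable {𝕜 𝔸 : Type*} [RCLike 𝕜] [NormedRing 𝔸] [NormedAlgebra 𝕜 𝔸] [CompleteSpace 𝔸]

theorem eventually_isUnit_and_norm_inverse_one_sub_smul_le {b : 𝔸} (hb : IsUnit b) :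
    ∃ C > 0, ∀ᶠ μ : ℝ in atTop,
      IsUnit (1 - (μ : 𝕜) • b) ∧ ‖Ring.inverse (1 - (μ : 𝕜) • b)‖ ≤ C / μ := by
  obtain ⟨u, rfl⟩ := hb
  have hf : Tendsto (fun μ : ℝ => (μ : 𝕜)⁻¹ • (1 : 𝔸) - u) atTop (𝓝 ↑(-u)) := by
    have h0 : Tendsto (fun μ : ℝ => (μ : 𝕜)⁻¹) atTop (𝓝 0) := by
      have := ((RCLike.continuous_ofReal (K := 𝕜)).tendsto 0).comp tendsto_inv_atTop_zero
      simpa [Function.comp_def] using this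
    simpa using (h0.smul_const (1 : 𝔸)).sub_const (u : 𝔸)
  have hinv := ((NormedRing.inverse_continuousAt (-u)).tendsto.comp hf).norm
  refine ⟨‖Ring.inverse (↑(-u) : 𝔸)‖ + 1, by positivity, ?_⟩
  filter_upwards [hf.eventually (Units.nhds (-u)), hinv.eventually (gt_mem_nhds (lt_add_one _)),
    eventually_gt_atTop 0] with μ ⟨v, hv⟩ hnorm hμ
  have hμ' : (μ : 𝕜) ≠ 0 := by exact_mod_cast hμ.ne'
  have hfac : 1 - (μ : 𝕜) • (u : 𝔸) = ((Units.mk0 (μ : 𝕜) hμ') • v : 𝔸ˣ) := by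
    rw [Units.val_smul, Units.smul_def, hv, smul_sub, smul_smul, Units.val_mk0,
      mul_inv_cancel₀ hμ', one_smul]
  rw [hfac, Ring.inverse_unit]
  refine ⟨Units.isUnit _, ?_⟩
  rw [Units.smul_inv, Units.val_smul, Units.smul_def, norm_smul, Units.val_inv_eq_inv_val,
    Units.val_mk0, norm_inv, RCLike.norm_ofReal, abs_of_pos hμ, ← Ring.inverse_unit, hv,
    inv_mul_eq_div]
  exact div_le_div_of_nonneg_right hnorm.le hμ.le

theorem exists_norm_one_sub_inverse_mul_sub_le {b k e t : 𝔸} (hb : IsUnit b)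
    (ht : b * (1 - t) = k) :
    ∃ c > 0, ∃ μs > 0, ∀ μ : ℝ, μs ≤ μ →
      IsUnit (1 - (μ : 𝕜) • b) ∧
      ‖(1 - Ring.inverse (1 - (μ : 𝕜) • b) * (1 - (μ : 𝕜) • k - e)) - t‖ ≤ c / μ := by
  obtain ⟨C, hC, hev⟩ := eventually_isUnit_and_norm_inverse_one_sub_smul_le (𝕜 := 𝕜) hb
  obtain ⟨μ₀, hμ₀⟩ := eventually_atTop.1 hev
  refine ⟨C * (‖e - t‖ + 1), by positivity, max μ₀ 1, by positivity, fun μ hμ => ?_⟩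
  obtain ⟨hP, hPnorm⟩ := hμ₀ μ (le_of_max_le_left hμ)
  have hμ : 0 < μ := lt_of_lt_of_le one_pos (le_of_max_le_right hμ)
  refine ⟨hP, ?_⟩
  rw [one_sub_inverse_mul_sub_eq hP ht]
  calc ‖Ring.inverse (1 - (μ : 𝕜) • b) * (e - t)‖
      ≤ C / μ * ‖e - t‖ := (norm_mul_le _ _).trans (by gcongr)
    _ ≤ C * (‖e - t‖ + 1) / μ := by
      rw [div_mul_eq_mul_div]
      gcongr
      linarith

end NormedAlgebra

open scoped Matrix.Norms.L2Operator in
theorem stmt_9_general (L M N : ℕ)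
    (Q QΔ : Matrix (Fin M) (Fin M) ℝ) (A : Matrix (Fin N) (Fin N) ℂ)
    (hQΔ : IsUnit QΔ) (hA : IsUnit A) :
    ∃ c > (0 : ℝ), ∃ μs > (0 : ℝ), ∀ μ : ℝ, μs ≤ μ →
      IsUnit (Phat L QΔ A μ) ∧
      opNorm (Tsmooth L Q QΔ A μ -
          (1 : Matrix (Fin L) (Fin L) ℂ) ⊗ₖ
            (cmplx ((1 : Matrix (Fin M) (Fin M) ℝ) - QΔ⁻¹ * Q) ⊗ₖ
              (1 : Matrix (Fin N) (Fin N) ℂ))) ≤ c / μ := by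
  have hQΔ' : IsUnit (cmplx QΔ) := hQΔ.map (algebraMap ℝ ℂ).mapMatrix
  have hb : IsUnit ((1 : Matrix (Fin L) (Fin L) ℂ) ⊗ₖ (cmplx QΔ ⊗ₖ A)) := by
    simp only [isUnit_iff_isUnit_det, det_kronecker, det_one, one_pow, one_mul] at hQΔ' hA ⊢
    exact ((hQΔ'.pow _).mul (hA.pow _)).pow _
  have ht : (1 : Matrix (Fin L) (Fin L) ℂ) ⊗ₖ (cmplx QΔ ⊗ₖ A) *
      (1 - (1 : Matrix (Fin L) (Fin L) ℂ) ⊗ₖ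
        (cmplx ((1 : Matrix (Fin M) (Fin M) ℝ) - QΔ⁻¹ * Q) ⊗ₖ (1 : Matrix (Fin N) (Fin N) ℂ))) =
      (1 : Matrix (Fin L) (Fin L) ℂ) ⊗ₖ (cmplx Q ⊗ₖ A) := by
    simp only [cmplx_eq_mapMatrix, map_sub, map_one, sub_kronecker, kronecker_sub,
      one_kronecker_one, sub_sub_cancel, ← mul_kronecker_mul, mul_one, ← map_mul,
      mul_nonsing_inv_cancel_left _ _ ((isUnit_iff_isUnit_det _).1 hQΔ)]
  simp only [Tsmooth, nonsing_inv_eq_ringInverse] at ht ⊢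
  exact exists_norm_one_sub_inverse_mul_sub_le (𝕜 := ℂ) (e := EH L M N) hb ht

theorem stmt_9 (L M N : ℕ) (hL : 0 < L) (hM : 0 < M) (hN : 0 < N)
    (Q QΔ : Matrix (Fin M) (Fin M) ℝ) (A : Matrix (Fin N) (Fin N) ℂ)
    (hQΔ : IsUnit QΔ) (hA : IsUnit A) :
    ∃ c > (0 : ℝ), ∃ μs > (0 : ℝ), ∀ μ : ℝ, μs ≤ μ →
      IsUnit (Phat L QΔ A μ) ∧
      opNorm (Tsmooth L Q QΔ A μ -
          (1 : Matrix (Fin L) (Fin L) ℂ) ⊗ₖ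
            (cmplx ((1 : Matrix (Fin M) (Fin M) ℝ) - QΔ⁻¹ * Q) ⊗ₖ
              (1 : Matrix (Fin N) (Fin N) ℂ))) ≤ c / μ :=
  stmt_9_general L M N Q QΔ A hQΔ hA
end
end
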